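/- arXiv:1509.01273 — 2 statements merged into one kernel-verified Lean document; each statement's English description precedes it below -/
import Mathlib

section
/- Let X be a subshift over a finite alphabet A. If there exists n ∈ ℕ, n ≥ 1, such that the union ⋃_{1 ≤ ℓ ≤ n} F_X(ℓ) has cardinality at most n, then X is sofic, i.e., the collection {F_X(w) : w ∈ L(X)} of all follower sets of words of X is finite. -/
/-- The finite word `w` occurs in the biinfinite sequence `x` starting at position `i`. -/
def WordAt {A : Type*} (x : ℤ → A) (i : ℤ) (w : List A) : Prop :=
  ∀ k : ℕ, (hk : k < w.length) → x (i + k) = w.get ⟨k, hk⟩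

/-- A subshift: a closed, shift-invariant subset of `A^ℤ` (with the product topology,
`A` carrying the discrete topology). -/
def IsSubshift {A : Type*} [TopologicalSpace A] (X : Set (ℤ → A)) : Prop :=
  IsClosed X ∧ (fun x : ℤ → A => fun i => x (i + 1)) '' X = X

/-- `w` belongs to the language of `X`: `w` occurs in some point of `X`. -/
def InLang {A : Type*} (X : Set (ℤ → A)) (w : List A) : Prop :=
  ∃ x ∈ X, ∃ i : ℤ, WordAt x i w

/-- The follower set of the word `w` in `X`: all right-infinite sequences `s`
such that `ws` occurs in some point of `X`. -/
def Follower {A : Type*} (X : Set (ℤ → A)) (w : List A) : Set (ℕ → A) :=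
  {s | ∃ x ∈ X, ∃ i : ℤ, WordAt x i w ∧ ∀ k : ℕ, x (i + w.length + k) = s k}

/-- `F_X(n)`: the collection of follower sets of words of length `n` in `X`. -/
def FollowerSets {A : Type*} (X : Set (ℤ → A)) (n : ℕ) : Set (Set (ℕ → A)) :=
  {F | ∃ w : List A, w.length = n ∧ InLang X w ∧ Follower X w = F}

/-- A subshift is sofic iff it has only finitely many follower sets. -/
def Sofic {A : Type*} (X : Set (ℤ → A)) : Prop :=
  {F | ∃ w : List A, InLang X w ∧ Follower X w = F}.Finite

namespace SoficAux

variable {A : Type*}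

/-- prepend a letter to a right-infinite sequence -/
def scons (a : A) (s : ℕ → A) : ℕ → A
  | 0 => a
  | k+1 => s k

lemma follower_concat (X : Set (ℤ → A)) (w : List A) (a : A) :
    Follower X (w ++ [a]) = {s | scons a s ∈ Follower X w} := by
  ext s
  constructor
  · rintro ⟨x, hx, i, hw, ht⟩
    refine ⟨x, hx, i, ?_, ?_⟩
    · intro k hk
      have hk' : k < (w ++ [a]).length := by simp; omega
      have := hw k hk'
      rw [List.get_eq_getElem, List.getElem_append_left hk] at this
      exact this
    · intro k
      match k with
      | 0 =>
        have hk' : w.length < (w ++ [a]).length := by simp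
        have := hw w.length hk'
        simp only [List.get_eq_getElem, List.getElem_concat_length] at this
        simpa [scons] using this
      | k+1 =>
        have := ht k
        have harith : i + ((w ++ [a]).length : ℕ) + (k : ℕ) = i + (w.length : ℕ) + ((k+1 : ℕ) : ℕ) := by
          simp; ring
        rw [harith] at this
        simpa [scons] using this
  · rintro ⟨x, hx, i, hw, ht⟩
    refine ⟨x, hx, i, ?_, ?_⟩
    · intro k hk
      simp only [List.length_append, List.length_singleton] at hk
      rcases Nat.lt_or_ge k w.length with hlt | hge
      · have := hw k hlt
        rw [List.get_eq_getElem]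
        rw [List.getElem_append_left hlt]
        exact this
      · have hkeq : k = w.length := by omega
        subst hkeq
        have := ht 0
        simp only [scons] at this
        simp only [List.get_eq_getElem, List.getElem_concat_length]
        simpa using this
    · intro k
      have := ht (k+1)
      simp only [scons] at this
      have harith : i + (w.length : ℕ) + ((k+1 : ℕ) : ℕ) = i + ((w ++ [a]).length : ℕ) + (k : ℕ) := by
        simp; ring
      rw [harith] at this
      exact this


lemma follower_nonempty {X : Set (ℤ → A)} {w : List A} (h : InLang X w) :
    (Follower X w).Nonempty := by
  obtain ⟨x, hx, i, hw⟩ := h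
  exact ⟨fun k => x (i + w.length + k), x, hx, i, hw, fun k => rfl⟩

lemma inLang_of_follower_nonempty {X : Set (ℤ → A)} {w : List A}
    (h : (Follower X w).Nonempty) : InLang X w := by
  obtain ⟨s, x, hx, i, hw, -⟩ := h
  exact ⟨x, hx, i, hw⟩

lemma inLang_of_concat {X : Set (ℤ → A)} {w : List A} {a : A}
    (h : InLang X (w ++ [a])) : InLang X w := by
  obtain ⟨x, hx, i, hw⟩ := h
  refine ⟨x, hx, i, fun k hk => ?_⟩
  have hk' : k < (w ++ [a]).length := by simp; omega
  have := hw k hk'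
  rw [List.get_eq_getElem, List.getElem_append_left hk] at this
  rw [List.get_eq_getElem]
  exact this

lemma follower_pair_subset (X : Set (ℤ → A)) (a b : A) :
    Follower X ([a] ++ [b]) ⊆ Follower X [b] := by
  rintro s ⟨x, hx, i, hw, ht⟩
  refine ⟨x, hx, i + 1, ?_, ?_⟩
  · intro k hk
    simp only [List.length_singleton] at hk
    have hk0 : k = 0 := by omega
    subst hk0
    have := hw 1 (by simp)
    simpa using this
  · intro k
    have := ht k
    have harith : i + (([a] ++ [b]).length : ℕ) + (k : ℕ) = (i + 1) + (([b].length : ℕ) : ℤ) + (k : ℕ) := by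
      simp; ring
    rw [harith] at this
    exact this

lemma exists_left_extension {X : Set (ℤ → A)} {b : A} {s : ℕ → A}
    (hs : s ∈ Follower X [b]) : ∃ a : A, s ∈ Follower X ([a] ++ [b]) := by
  obtain ⟨x, hx, i, hw, ht⟩ := hs
  refine ⟨x (i - 1), x, hx, i - 1, ?_, ?_⟩
  · intro k hk
    simp only [List.length_append, List.length_singleton] at hk
    interval_cases k
    · simp
    · have := hw 0 (by simp)
      simp only [List.get_eq_getElem] at this ⊢
      simpa using this
  · intro k
    have := ht k
    have harith : i - 1 + ((([x (i-1)] ++ [b]).length : ℕ) : ℤ) + (k : ℕ) = i + (([b].length : ℕ) : ℤ) + (k : ℕ) := by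
      simp; ring
    rw [harith]
    exact this

lemma followerSets_finite [Finite A] (X : Set (ℤ → A)) (m : ℕ) :
    (FollowerSets X m).Finite := by
  have hsub : FollowerSets X m ⊆ (Follower X) '' {w : List A | w.length = m} := by
    rintro F ⟨w, h1, -, h3⟩
    exact ⟨w, h1, h3⟩
  exact ((List.finite_length_eq A m).image _).subset hsub

/-- The union `⋃_{1 ≤ ℓ ≤ m} F_X(ℓ)`. -/
def U (X : Set (ℤ → A)) (m : ℕ) : Set (Set (ℕ → A)) :=
  ⋃ ℓ ∈ Finset.Icc 1 m, FollowerSets X ℓ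

lemma mem_U {X : Set (ℤ → A)} {m : ℕ} {F : Set (ℕ → A)} :
    F ∈ U X m ↔ ∃ ℓ, 1 ≤ ℓ ∧ ℓ ≤ m ∧ F ∈ FollowerSets X ℓ := by
  simp [U, Finset.mem_Icc, and_assoc]

lemma U_finite [Finite A] (X : Set (ℤ → A)) (m : ℕ) : (U X m).Finite := by
  apply Set.Finite.biUnion (Finset.Icc 1 m).finite_toSet
  intro ℓ _
  exact followerSets_finite X ℓ

lemma U_mono {X : Set (ℤ → A)} {m m' : ℕ} (h : m ≤ m') : U X m ⊆ U X m' := by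
  intro F hF
  rw [mem_U] at hF ⊢
  obtain ⟨ℓ, h1, h2, h3⟩ := hF
  exact ⟨ℓ, h1, h2.trans h, h3⟩

/-- Propagation: once the follower sets of words of length `ℓ+1` are all among those of
shorter words, the same holds for every length. -/
lemma propagation {X : Set (ℤ → A)} {ℓ : ℕ} (hℓ : 1 ≤ ℓ)
    (h : FollowerSets X (ℓ+1) ⊆ U X ℓ) :
    ∀ m, 1 ≤ m → FollowerSets X m ⊆ U X ℓ := by
  intro m
  induction m with
  | zero => omega
  | succ m ih =>
    intro _
    by_cases hm : m + 1 ≤ ℓ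
    · intro F hF
      exact mem_U.mpr ⟨m+1, by omega, hm, hF⟩
    by_cases hm' : m + 1 = ℓ + 1
    · rw [hm']
      exact h
    rintro F ⟨w, hlen, hw, rfl⟩
    rcases w.eq_nil_or_concat' with hnil | ⟨u, a, rfl⟩
    · subst hnil; simp at hlen
    have hulen : u.length = m := by simp at hlen; omega
    have humem : Follower X u ∈ U X ℓ :=
      ih (by omega) ⟨u, hulen, inLang_of_concat hw, rfl⟩
    rw [mem_U] at humem
    obtain ⟨k, hk1, hkℓ, u', hu'len, hu'lang, hfe⟩ := humem
    have heq : Follower X (u ++ [a]) = Follower X (u' ++ [a]) := by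
      rw [follower_concat, follower_concat, hfe]
    have hne : (Follower X (u' ++ [a])).Nonempty := heq ▸ follower_nonempty hw
    have hlang' : InLang X (u' ++ [a]) := inLang_of_follower_nonempty hne
    have hmem' : Follower X (u ++ [a]) ∈ FollowerSets X (u'.length + 1) :=
      ⟨u' ++ [a], by simp, hlang', heq.symm⟩
    rcases Nat.lt_or_ge u'.length ℓ with h2 | h2
    · exact mem_U.mpr ⟨u'.length + 1, by omega, by omega, hmem'⟩
    · have : u'.length = ℓ := by omega
      exact h (this ▸ hmem')

lemma inLang_pair_right {X : Set (ℤ → A)} {a b : A}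
    (h : InLang X ([a] ++ [b])) : InLang X [b] := by
  obtain ⟨x, hx, i, hw⟩ := h
  refine ⟨x, hx, i + 1, fun k hk => ?_⟩
  simp only [List.length_singleton] at hk
  have hk0 : k = 0 := by omega
  subst hk0
  have := hw 1 (by simp)
  simpa using this

lemma U_one {X : Set (ℤ → A)} : U X 1 = FollowerSets X 1 := by
  ext F
  rw [mem_U]
  constructor
  · rintro ⟨ℓ, h1, h2, h3⟩
    have : ℓ = 1 := by omega
    exact this ▸ h3
  · intro hF
    exact ⟨1, le_refl _, le_refl _, hF⟩

lemma followerSets_two_subset {X : Set (ℤ → A)} {F₀ : Set (ℕ → A)}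
    (h1 : FollowerSets X 1 = {F₀}) : FollowerSets X 2 ⊆ U X 1 := by
  have hsingle : ∀ c : A, InLang X [c] → Follower X [c] = F₀ := by
    intro c hc
    have : Follower X [c] ∈ FollowerSets X 1 := ⟨[c], rfl, hc, rfl⟩
    rw [h1] at this
    exact this
  rintro F ⟨w, hlen, hw, rfl⟩
  obtain ⟨a, b, rfl⟩ : ∃ a b, w = [a] ++ [b] := by
    match w, hlen with
    | [a, b], _ => exact ⟨a, b, rfl⟩
  have hInb : InLang X [b] := inLang_pair_right hw
  have hIna : InLang X [a] := inLang_of_concat hw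
  have hkey : Follower X ([a] ++ [b]) = Follower X [b] := by
    apply Set.Subset.antisymm (follower_pair_subset X a b)
    intro s hs
    obtain ⟨a', hs'⟩ := exists_left_extension hs
    have hlang' : InLang X ([a'] ++ [b]) := inLang_of_follower_nonempty ⟨s, hs'⟩
    have hIna' : InLang X [a'] := inLang_of_concat hlang'
    rw [follower_concat] at hs' ⊢
    rw [hsingle a hIna]
    rw [hsingle a' hIna'] at hs'
    exact hs'
  rw [hkey, U_one]
  exact ⟨[b], rfl, hInb, rfl⟩

end SoficAux

/-- If for some `n ≥ 1` the union `⋃_{1 ≤ ℓ ≤ n} F_X(ℓ)` has at most `n` elements,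
then `X` is sofic. -/
theorem sofic_of_union_followerSets_card_le {A : Type*} [Fintype A] [TopologicalSpace A]
    [DiscreteTopology A] (X : Set (ℤ → A)) (hX : IsSubshift X) (n : ℕ) (hn : 1 ≤ n)
    (h : (⋃ ℓ ∈ Finset.Icc 1 n, FollowerSets X ℓ).ncard ≤ n) :
    Sofic X := by
  classical
  open SoficAux in
  rcases Set.eq_empty_or_nonempty X with hXe | ⟨x, hx⟩
  · apply Set.Finite.subset Set.finite_empty
    rintro F ⟨w, ⟨y, hy, -⟩, -⟩
    rw [hXe] at hy
    exact hy.elim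
  have h' : (SoficAux.U X n).ncard ≤ n := h
  have hlang1 : InLang X [x 0] := by
    refine ⟨x, hx, 0, fun k hk => ?_⟩
    simp only [List.length_singleton] at hk
    have hk0 : k = 0 := by omega
    subst hk0
    simp
  have hmain : ∃ ℓ, 1 ≤ ℓ ∧ FollowerSets X (ℓ+1) ⊆ SoficAux.U X ℓ := by
    by_contra hcon
    push_neg at hcon
    have hstrict : ∀ ℓ, 1 ≤ ℓ → (SoficAux.U X ℓ).ncard < (SoficAux.U X (ℓ+1)).ncard := by
      intro ℓ hℓ
      obtain ⟨F, hF1, hF2⟩ := Set.not_subset.mp (hcon ℓ hℓ)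
      refine Set.ncard_lt_ncard ⟨SoficAux.U_mono (Nat.le_succ ℓ), fun hsup => hF2 ?_⟩
        (SoficAux.U_finite X (ℓ+1))
      exact hsup (SoficAux.mem_U.mpr ⟨ℓ+1, by omega, le_refl _, hF1⟩)
    have hchain : ∀ ℓ, 1 ≤ ℓ → (SoficAux.U X 1).ncard + ℓ ≤ (SoficAux.U X ℓ).ncard + 1 := by
      intro ℓ hℓ
      induction ℓ with
      | zero => omega
      | succ m ih =>
        rcases Nat.eq_zero_or_pos m with hm | hm
        · subst hm; simp only [Nat.zero_add]; omega
        · have := hstrict m hm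
          have := ih hm
          omega
    have hpos : 1 ≤ (SoficAux.U X 1).ncard := by
      rw [Nat.one_le_iff_ne_zero, ← Nat.pos_iff_ne_zero,
        Set.ncard_pos (SoficAux.U_finite X 1)]
      exact ⟨Follower X [x 0], SoficAux.mem_U.mpr ⟨1, le_refl _, le_refl _,
        ⟨[x 0], rfl, hlang1, rfl⟩⟩⟩
    have hcard1 : (SoficAux.U X 1).ncard = 1 := by
      have hle : (SoficAux.U X n).ncard ≤ (SoficAux.U X n).ncard := le_refl _
      have := hchain n hn
      omega
    obtain ⟨F₀, hF₀⟩ := Set.ncard_eq_one.mp hcard1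
    rw [SoficAux.U_one] at hF₀
    exact hcon 1 (le_refl _) (SoficAux.followerSets_two_subset hF₀)
  obtain ⟨ℓ, hℓ1, hsub⟩ := hmain
  apply Set.Finite.subset ((SoficAux.U_finite X ℓ).union
    (Set.finite_singleton (Follower X ([] : List A))))
  rintro F ⟨w, hw, rfl⟩
  rcases Nat.eq_zero_or_pos w.length with h0 | h0
  · right
    rw [List.length_eq_zero_iff.mp h0]
    rfl
  · exact Or.inl (SoficAux.propagation hℓ1 hsub w.length h0 ⟨w, rfl, hw, rfl⟩)
end

section
/- Let X be a subshift over a finite alphabet A. If there exists n ∈ ℕ, n ≥ 1, such that |F_X(n)| ≤ log₂(n+1) (equivalently, 2^{|F_X(n)|} ≤ n + 1), then X is sofic, i.e., the collection {F_X(w) : w ∈ L(X)} of all follower sets of words of X is finite. -/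
section Aux

variable {A : Type*}

/-- prepend a letter to a right-infinite sequence -/
def scons (a : A) (s : ℕ → A) : ℕ → A
  | 0 => a
  | (k+1) => s k

lemma wordAt_append {x : ℤ → A} {i : ℤ} {u w : List A} :
    WordAt x i (u ++ w) ↔ WordAt x i u ∧ WordAt x (i + u.length) w := by
  constructor
  · intro h
    constructor
    · intro k hk
      have hk' : k < (u ++ w).length := by simp; omega
      have := h k hk'
      simpa [List.get_eq_getElem, List.getElem_append, hk] using this
    · intro k hk
      have hk' : u.length + k < (u ++ w).length := by simp; omega
      have := h (u.length + k) hk'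
      simp only [List.get_eq_getElem] at this ⊢
      rw [List.getElem_append_right (by omega)] at this
      simp only [Nat.add_sub_cancel_left] at this
      rw [← this]
      congr 1
      push_cast
      ring
  · rintro ⟨h1, h2⟩ k hk
    simp only [List.length_append] at hk
    by_cases hku : k < u.length
    · have := h1 k hku
      simp only [List.get_eq_getElem] at this ⊢
      rw [List.getElem_append_left hku]
      exact this
    · have hkw : k - u.length < w.length := by omega
      have := h2 (k - u.length) hkw
      simp only [List.get_eq_getElem] at this ⊢
      rw [List.getElem_append_right (by omega)]
      rw [← this]
      congr 1
      have : (k : ℤ) = u.length + (k - u.length : ℕ) := by omega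
      rw [this]; ring

/-- Follower sets of words in the language are nonempty. -/
lemma follower_nonempty {X : Set (ℤ → A)} {w : List A} (hw : InLang X w) :
    (Follower X w).Nonempty := by
  obtain ⟨x, hx, i, h1⟩ := hw
  exact ⟨fun k => x (i + w.length + k), x, hx, i, h1, fun k => rfl⟩

lemma inLang_of_follower_nonempty {X : Set (ℤ → A)} {w : List A}
    (hw : (Follower X w).Nonempty) : InLang X w := by
  obtain ⟨s, x, hx, i, h1, _⟩ := hw
  exact ⟨x, hx, i, h1⟩

/-- The key recursion: the follower set of `w ++ [a]` is determined by that of `w`. -/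
lemma follower_append_singleton (X : Set (ℤ → A)) (w : List A) (a : A) :
    Follower X (w ++ [a]) = {s | scons a s ∈ Follower X w} := by
  ext s
  constructor
  · rintro ⟨x, hx, i, h1, h2⟩
    have h1' := (wordAt_append.mp h1).1
    refine ⟨x, hx, i, h1', fun k => ?_⟩
    cases k with
    | zero =>
      have hlen : w.length < (w ++ [a]).length := by simp
      have := h1 w.length hlen
      simp only [List.get_eq_getElem] at this
      rw [List.getElem_append_right (le_refl _)] at this
      simpa [scons] using this
    | succ k =>
      have hs : scons a s (k + 1) = s k := rfl
      rw [hs, ← h2 k]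
      congr 1
      simp only [List.length_append, List.length_singleton]
      push_cast
      ring
  · rintro ⟨x, hx, i, h1, h2⟩
    refine ⟨x, hx, i, ?_, fun k => ?_⟩
    · rw [wordAt_append]
      refine ⟨h1, fun k hk => ?_⟩
      simp only [List.length_singleton] at hk
      interval_cases k
      have := h2 0
      simpa [scons] using this
    · have h' : x (i + ↑w.length + ↑(k + 1)) = s k := h2 (k + 1)
      rw [← h']
      congr 1
      simp only [List.length_append, List.length_singleton]
      push_cast
      ring

/-- suffix: followers of `u ++ w` also follow `w`. -/
lemma follower_append_subset (X : Set (ℤ → A)) (u w : List A) :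
    Follower X (u ++ w) ⊆ Follower X w := by
  rintro s ⟨x, hx, i, h1, h2⟩
  refine ⟨x, hx, i + u.length, (wordAt_append.mp h1).2, fun k => ?_⟩
  have := h2 k
  rw [← this]
  congr 1
  simp only [List.length_append]
  push_cast
  ring

lemma inLang_prefix {X : Set (ℤ → A)} {u w : List A} (h : InLang X (u ++ w)) :
    InLang X u := by
  obtain ⟨x, hx, i, h1⟩ := h
  exact ⟨x, hx, i, (wordAt_append.mp h1).1⟩

/-- cumulative collection of follower sets of words of length at most `m` -/
def GLang (X : Set (ℤ → A)) (m : ℕ) : Set (Set (ℕ → A)) :=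
  {F | ∃ w : List A, w.length ≤ m ∧ InLang X w ∧ Follower X w = F}

lemma gLang_mono (X : Set (ℤ → A)) : Monotone (GLang X) := by
  intro a b hab F ⟨w, h1, h2, h3⟩
  exact ⟨w, h1.trans hab, h2, h3⟩

lemma gLang_finite [Finite A] (X : Set (ℤ → A)) (m : ℕ) : (GLang X m).Finite := by
  have : GLang X m ⊆ (fun w => Follower X w) '' {w : List A | w.length ≤ m} := by
    rintro F ⟨w, h1, _, h3⟩
    exact ⟨w, h1, h3⟩
  exact ((List.finite_length_le A m).image _).subset this

lemma followerSets_finite [Finite A] (X : Set (ℤ → A)) (n : ℕ) :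
    (FollowerSets X n).Finite := by
  have : FollowerSets X n ⊆ (fun w => Follower X w) '' {w : List A | w.length = n} := by
    rintro F ⟨w, h1, _, h3⟩
    exact ⟨w, h1, h3⟩
  exact ((List.finite_length_eq A n).image _).subset this

/-- Every follower set of a word of length ≤ n is a union of follower sets from `F_X(n)`. -/
lemma follower_eq_sUnion {X : Set (ℤ → A)} {w : List A} {n : ℕ}
    (hw : InLang X w) (hlen : w.length ≤ n) :
    Follower X w = ⋃₀ {F ∈ FollowerSets X n | F ⊆ Follower X w} := by
  apply Set.Subset.antisymm
  · rintro s ⟨x, hx, i, h1, h2⟩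
    set d := n - w.length with hd
    set u : List A := List.ofFn (fun j : Fin d => x (i - d + j)) with hu
    have hulen : u.length = d := by simp [hu]
    have hwa : WordAt x (i - d) u := by
      intro k hk
      rw [hulen] at hk
      simp only [hu, List.get_eq_getElem, List.getElem_ofFn]
    have hwuw : WordAt x (i - d) (u ++ w) := by
      rw [wordAt_append]
      refine ⟨hwa, ?_⟩
      rw [hulen]
      have : i - (d : ℤ) + d = i := by ring
      rwa [this]
    have hs : s ∈ Follower X (u ++ w) := by
      refine ⟨x, hx, i - d, hwuw, fun k => ?_⟩
      rw [← h2 k]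
      congr 1
      simp only [List.length_append, hulen]
      push_cast
      ring
    refine ⟨Follower X (u ++ w), ⟨⟨u ++ w, ?_, ⟨x, hx, i - d, hwuw⟩, rfl⟩,
      follower_append_subset X u w⟩, hs⟩
    simp [hulen, hd]; omega
  · rintro s ⟨F, ⟨_, hFsub⟩, hsF⟩
    exact hFsub hsF

end Aux

/-- If for some `n ≥ 1`, `|F_X(n)| ≤ log₂(n+1)` (equivalently `2^{|F_X(n)|} ≤ n + 1`),
then `X` is sofic. -/
theorem sofic_of_followerSets_card_le_log {A : Type*} [Fintype A] [TopologicalSpace A]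
    [DiscreteTopology A] (X : Set (ℤ → A)) (hX : IsSubshift X) (n : ℕ) (hn : 1 ≤ n)
    (h : 2 ^ (FollowerSets X n).ncard ≤ n + 1) :
    Sofic X := by
  classical
  -- trivial case: X empty
  rcases Set.eq_empty_or_nonempty X with hXe | hXne
  · have : {F | ∃ w : List A, InLang X w ∧ Follower X w = F} = ∅ := by
      ext F
      simp only [Set.mem_setOf_eq, Set.mem_empty_iff_false, iff_false, not_exists]
      rintro w ⟨⟨x, hx, _⟩, _⟩
      simp [hXe] at hx
    rw [Sofic, this]
    exact Set.finite_empty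
  -- counting: |GLang X n| ≤ n
  have hKfin := followerSets_finite X n
  have hgfin : ∀ m, (GLang X m).Finite := gLang_finite X
  have hempty_not : ∀ m, (∅ : Set (ℕ → A)) ∉ GLang X m := by
    rintro m ⟨w, _, hw, h3⟩
    exact (follower_nonempty hw).ne_empty h3
  have hcount : (GLang X n).ncard ≤ n := by
    set K := hKfin.toFinset with hK
    have hsub : insert (∅ : Set (ℕ → A)) (GLang X n) ⊆
        ↑(K.powerset.image fun T : Finset (Set (ℕ → A)) => ⋃₀ (T : Set (Set (ℕ → A)))) := by
      rintro F hF
      rcases hF with rfl | ⟨w, h1, h2, h3⟩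
      · simp only [Finset.coe_image, Set.mem_image, Finset.mem_coe]
        exact ⟨∅, by simp⟩
      · have heq := follower_eq_sUnion h2 h1
        set T := {F ∈ FollowerSets X n | F ⊆ Follower X w} with hT
        have hTfin : T.Finite := hKfin.subset (fun F hF => hF.1)
        simp only [Finset.coe_image, Set.mem_image, Finset.mem_coe]
        refine ⟨hTfin.toFinset, ?_, ?_⟩
        · rw [Finset.mem_powerset]
          intro F hF
          rw [hTfin.mem_toFinset] at hF
          rw [hK, Set.Finite.mem_toFinset]
          exact hF.1
        · rw [← h3, heq, hTfin.coe_toFinset]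
    have hcard : (insert (∅ : Set (ℕ → A)) (GLang X n)).ncard ≤ 2 ^ (FollowerSets X n).ncard := by
      calc (insert (∅ : Set (ℕ → A)) (GLang X n)).ncard
          ≤ (K.powerset.image fun T : Finset (Set (ℕ → A)) => ⋃₀ (T : Set (Set (ℕ → A)))).card := by
            rw [← Set.ncard_coe_finset]
            exact Set.ncard_le_ncard hsub (Finset.finite_toSet _)
        _ ≤ K.powerset.card := Finset.card_image_le
        _ = 2 ^ K.card := Finset.card_powerset K
        _ = 2 ^ (FollowerSets X n).ncard := by
            rw [hK, Set.ncard_eq_toFinset_card _ hKfin]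
    rw [Set.ncard_insert_of_notMem (hempty_not n) (hgfin n)] at hcard
    omega
  -- find stabilization point m < n
  have hstab : ∃ m, GLang X m = GLang X (m + 1) := by
    by_contra hc
    push_neg at hc
    have hmono : ∀ m, (GLang X m).ncard + 1 ≤ (GLang X (m+1)).ncard := by
      intro m
      have hss : GLang X m ⊂ GLang X (m+1) :=
        Set.ssubset_iff_subset_ne.mpr ⟨gLang_mono X (Nat.le_succ m), hc m⟩
      have := Set.ncard_lt_ncard hss (hgfin (m+1))
      omega
    have hlb : ∀ m, m + 1 ≤ (GLang X m).ncard := by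
      intro m
      induction m with
      | zero =>
        have hne : (GLang X 0).Nonempty := by
          obtain ⟨x, hx⟩ := hXne
          exact ⟨Follower X [], [], by simp, ⟨x, hx, 0, fun k hk => by simp at hk⟩, rfl⟩
        have := hne.ncard_pos (hgfin 0)
        omega
      | succ m ih =>
        have := hmono m
        omega
    have := hlb n
    omega
  obtain ⟨m, hm⟩ := hstab
  -- stabilization propagates
  have hprop : ∀ j, GLang X (m + j) = GLang X m := by
    intro j
    induction j with
    | zero => rfl
    | succ j ih =>
      apply Set.Subset.antisymm
      · rintro F ⟨w, h1, h2, h3⟩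
        by_cases hle : w.length ≤ m + j
        · rw [← ih]
          exact ⟨w, hle, h2, h3⟩
        · have hwne : w ≠ [] := by
            rintro rfl
            simp at hle
          set a := w.getLast hwne with ha
          set v := w.dropLast with hv
          have hvw : v ++ [a] = w := List.dropLast_append_getLast hwne
          have hvlen : v.length ≤ m + j := by
            have : w.dropLast.length = w.length - 1 := List.length_dropLast
            simp only [hv, this]
            omega
          have hInv : InLang X v := by
            rw [← hvw] at h2
            exact inLang_prefix h2
          have hFv : Follower X v ∈ GLang X m := by
            rw [← ih]
            exact ⟨v, hvlen, hInv, rfl⟩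
          obtain ⟨v', hv'len, hInv', hv'eq⟩ := hFv
          have hkey : Follower X w = Follower X (v' ++ [a]) := by
            rw [← hvw, follower_append_singleton, follower_append_singleton, hv'eq]
          have hInva : InLang X (v' ++ [a]) := by
            apply inLang_of_follower_nonempty
            rw [← hkey]
            exact follower_nonempty h2
          rw [hm]
          refine ⟨v' ++ [a], ?_, hInva, by rw [← hkey, h3]⟩
          simp only [List.length_append, List.length_singleton]
          omega
      · exact gLang_mono X (Nat.le_add_right m (j+1))
  -- conclude
  have hfinal : {F | ∃ w : List A, InLang X w ∧ Follower X w = F} ⊆ GLang X m := by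
    rintro F ⟨w, h2, h3⟩
    have : F ∈ GLang X (m + w.length) :=
      gLang_mono X (Nat.le_add_left _ _) ⟨w, le_refl _, h2, h3⟩
    rwa [hprop w.length] at this
  exact (hgfin m).subset hfinal
end
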